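/- Let P, Q ∈ ℂ^{n×n} and λ ∈ ℂ, and suppose that P Q* + Q P* is positive semidefinite and that the n×2n matrix [P -Q] has rank n (where * denotes conjugate transpose). If z ∈ ℂ^n satisfies z*(P + Q) = 0, then z*P = 0 and z*Q = 0, and hence z = 0. In particular P + Q is nonsingular. -/

import Mathlib

open Matrix
open scoped ComplexOrder

open Matrix

namespace Matrix

variable {m n R : Type*} [Fintype m] [Fintype n]

theorem vecMul_injective_of_rank_eq_card {K : Type*} [Field K] {A : Matrix m n K}
    (hA : A.rank = Fintype.card m) : Function.Injective A.vecMul := by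
  rw [vecMul_injective_iff, linearIndependent_iff_card_eq_finrank_span, Set.finrank,
    ← rank_eq_finrank_span_row, hA]

theorem PosSemidef.star_vecMul_eq_zero_of_star_vecMul_add_eq_zero [CommRing R] [PartialOrder R]
    [StarRing R] [StarOrderedRing R] [NoZeroDivisors R] {P Q : Matrix m n R}
    (hPQ : (P * Qᴴ + Q * Pᴴ).PosSemidef) {z : m → R} (hz : star z ᵥ* (P + Q) = 0) :
    star z ᵥ* P = 0 ∧ star z ᵥ* Q = 0 := by
  set w := star z ᵥ* Q
  have hP : star z ᵥ* P = -w := by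
    rw [vecMul_add] at hz
    exact eq_neg_of_add_eq_zero_left hz
  have hform : star z ⬝ᵥ ((P * Qᴴ + Q * Pᴴ) *ᵥ z) = -(w ⬝ᵥ star w + w ⬝ᵥ star w) := by
    rw [add_mulVec, dotProduct_add, ← mulVec_mulVec, ← mulVec_mulVec, mulVec_conjTranspose,
      mulVec_conjTranspose, dotProduct_mulVec (star z) P, dotProduct_mulVec (star z) Q, hP,
      star_neg, neg_dotProduct, dotProduct_neg, neg_add]
  have hnonneg := hPQ.dotProduct_mulVec_nonneg z
  rw [hform, neg_nonneg] at hnonneg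
  have hw : w ⬝ᵥ star w = 0 := by
    have h0 := dotProduct_self_star_nonneg w
    exact le_antisymm ((le_add_of_nonneg_left h0).trans hnonneg) h0
  have hw0 : w = 0 := dotProduct_self_star_eq_zero.mp hw
  exact ⟨by rw [hP, hw0, neg_zero], hw0⟩

end Matrix

theorem stmt_15 (n : ℕ) (P Q : Matrix (Fin n) (Fin n) ℂ)
    (hpsd : (P * Qᴴ + Q * Pᴴ).PosSemidef)
    (hrank : (Matrix.fromCols P (-Q)).rank = n) :
    (∀ z : Fin n → ℂ, Matrix.vecMul (star z) (P + Q) = 0 →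
      Matrix.vecMul (star z) P = 0 ∧ Matrix.vecMul (star z) Q = 0 ∧ z = 0) ∧
    IsUnit (P + Q) := by
  have hinj : Function.Injective (fromCols P (-Q)).vecMul :=
    vecMul_injective_of_rank_eq_card (by rw [hrank, Fintype.card_fin])
  have key : ∀ z : Fin n → ℂ, star z ᵥ* (P + Q) = 0 →
      star z ᵥ* P = 0 ∧ star z ᵥ* Q = 0 ∧ z = 0 := by
    intro z hz
    obtain ⟨hP, hQ⟩ := hpsd.star_vecMul_eq_zero_of_star_vecMul_add_eq_zero hz
    refine ⟨hP, hQ, ?_⟩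
    have hzero : star z ᵥ* fromCols P (-Q) = 0 ᵥ* fromCols P (-Q) := by
      simp [vecMul_neg, hP, hQ]
    simpa using hinj hzero
  refine ⟨key, ?_⟩
  rw [← vecMul_injective_iff_isUnit, ← coe_vecMulLinear, injective_iff_map_eq_zero]
  intro v hv
  simpa using (key (star v) (by rwa [star_star])).2.2
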